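/- Let H be a separable real Hilbert space, let (e_k)_{k ≥ 1} be an orthonormal sequence in H, let B₁ and B₂ be bounded linear operators on H, let a, w ∈ H, let q₀ > 0, let q₁, q₂ be real numbers with |q₁| > q₀ and |q₂| > q₀, and for j = 1, 2 let (λ_{j,n})_{n ≥ 1} be sequences of complex numbers with Re(λ_{j,n}) > 0 for all n and λ_{j,n} → −iq_j as n → ∞. Then there exists N such that for all n ≥ N: | exp( ∑_{j=1}^{2} ( ((λ_{j,n} − 1)/(2λ_{j,n})) ∑_{k=1}^{n} ⟨e_k, B_j w⟩² − (1/2)‖B_j w‖² + i λ_{j,n}^{−1/2} ∑_{k=1}^{n} ⟨e_k, B_j w⟩ ⟨e_k, a⟩ + i ⟨e_{n+1}, a⟩ · √( ‖B_j w‖² − ∑_{k=1}^{n} ⟨e_k, B_j w⟩² ) ) ) | ≤ k(q₀; w), where the square root is the real square root of a nonnegative quantity (nonnegative by Bessel's inequality). -/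

import Mathlib

/-!
Only the real parts of the exponents matter. The last term of each exponent is purely
imaginary, and since `Re λ ≥ 0` we have `Re((λ - 1)/(2λ)) ≤ 1/2`, so by Bessel's inequality the
first two terms have nonpositive real part. The square root `z = λ^{-1/2}` satisfies
`Re (z²) = Re (λ⁻¹) ≥ 0`, whence `2 (Im z)² ≤ |z|² = |λ|⁻¹`; by Cauchy–Schwarz and Bessel the third
term therefore has real part at most `(2|λ|)^{-1/2} ‖B w‖ ‖a‖`. Finally `|λ_{j,n}| → |q_j| > q₀`.
-/

open scoped RealInnerProductSpace

/-- The dominating function `k(q₀; w)` of equation (3.10) of the paper. -/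
noncomputable def kfun {H : Type*} [NormedAddCommGroup H] [InnerProductSpace ℝ H]
    (B₁ B₂ : H →L[ℝ] H) (a : H) (q₀ : ℝ) (w : H) : ℝ :=
  Real.exp ((2 * q₀) ^ (-(1 : ℝ) / 2) * ‖B₁‖ * ‖w‖ * ‖a‖
    + (2 * q₀) ^ (-(1 : ℝ) / 2) * ‖B₂‖ * ‖w‖ * ‖a‖)

namespace Complex

lemma two_mul_im_sq_le_norm_sq {z : ℂ} (h : 0 ≤ (z ^ 2).re) : 2 * z.im ^ 2 ≤ ‖z‖ ^ 2 := by
  rw [Complex.sq_norm, normSq_apply]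
  rw [sq, mul_re] at h
  nlinarith

lemma abs_im_cpow_neg_half_le {l : ℂ} (hl : 0 ≤ l.re) :
    |(l ^ (-(1 : ℂ) / 2)).im| ≤ (2 * ‖l‖) ^ (-(1 : ℝ) / 2) := by
  set z := l ^ (-(1 : ℂ) / 2)
  have hz : z ^ 2 = l⁻¹ := by
    rw [← cpow_nat_mul, ← cpow_neg_one]
    norm_num
  have him : 2 * z.im ^ 2 ≤ ‖l‖⁻¹ := by
    have h := two_mul_im_sq_le_norm_sq (z := z)
      (by rw [hz, inv_re]; exact div_nonneg hl (normSq_nonneg _))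
    rwa [← norm_pow, hz, norm_inv] at h
  have hrhs : ((2 * ‖l‖) ^ (-(1 : ℝ) / 2)) ^ 2 = (2 * ‖l‖)⁻¹ := by
    rw [← Real.rpow_mul_natCast (by positivity), ← Real.rpow_neg_one]
    norm_num
  refine abs_le_of_sq_le_sq ?_ (by positivity)
  rw [hrhs, mul_inv]
  linarith

lemma re_div_two_mul_le {l : ℂ} (hl : 0 ≤ l.re) : ((l - 1) / (2 * l)).re ≤ 1 / 2 := by
  rcases eq_or_ne l 0 with rfl | hl0
  · norm_num
  have h : (l - 1) / (2 * l) = 1 / 2 - (2 * l)⁻¹ := by field_simp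
  rw [h, sub_re]
  norm_num
  exact div_nonneg hl (normSq_nonneg _)

lemma re_summand_le {l : ℂ} (hl : 0 ≤ l.re) {S M T c s : ℝ} (hS₀ : 0 ≤ S) (hS : S ≤ M ^ 2) :
    (((l - 1) / (2 * l)) * (S : ℂ) - (M : ℂ) ^ 2 / 2 + I * l ^ (-(1 : ℂ) / 2) * (T : ℂ)
      + I * (c : ℂ) * (s : ℂ)).re ≤ |(l ^ (-(1 : ℂ) / 2)).im| * |T| := by
  have hre : (((l - 1) / (2 * l)) * (S : ℂ) - (M : ℂ) ^ 2 / 2 + I * l ^ (-(1 : ℂ) / 2) * (T : ℂ)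
      + I * (c : ℂ) * (s : ℂ)).re
      = ((l - 1) / (2 * l)).re * S - M ^ 2 / 2 - (l ^ (-(1 : ℂ) / 2)).im * T := by
    simp [← ofReal_pow]
    ring
  have hfirst : ((l - 1) / (2 * l)).re * S ≤ M ^ 2 / 2 := by
    nlinarith [re_div_two_mul_le hl]
  rw [hre, ← abs_mul]
  linarith [neg_le_abs ((l ^ (-(1 : ℂ) / 2)).im * T)]

end Complex

namespace Orthonormal

variable {H ι : Type*} [NormedAddCommGroup H] [InnerProductSpace ℝ H] {e : ι → H}

lemma sum_inner_sq_le (he : Orthonormal ℝ e) (s : Finset ι) (x : H) :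
    ∑ k ∈ s, ⟪e k, x⟫ ^ 2 ≤ ‖x‖ ^ 2 := by
  simpa [Real.norm_eq_abs, sq_abs] using he.sum_inner_products_le (s := s) x

lemma abs_sum_inner_mul_inner_le (he : Orthonormal ℝ e) (s : Finset ι) (x y : H) :
    |∑ k ∈ s, ⟪e k, x⟫ * ⟪e k, y⟫| ≤ ‖x‖ * ‖y‖ := by
  refine abs_le_of_sq_le_sq ?_ (by positivity)
  calc (∑ k ∈ s, ⟪e k, x⟫ * ⟪e k, y⟫) ^ 2
      ≤ (∑ k ∈ s, ⟪e k, x⟫ ^ 2) * ∑ k ∈ s, ⟪e k, y⟫ ^ 2 := Finset.sum_mul_sq_le_sq_mul_sq _ _ _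
    _ ≤ ‖x‖ ^ 2 * ‖y‖ ^ 2 :=
      mul_le_mul (he.sum_inner_sq_le s x) (he.sum_inner_sq_le s y)
        (Finset.sum_nonneg fun _ _ => sq_nonneg _) (sq_nonneg _)
    _ = (‖x‖ * ‖y‖) ^ 2 := by ring

lemma re_summand_le (he : Orthonormal ℝ e) (s : Finset ι) (v a : H) (c : ℝ) {l : ℂ}
    (hl : 0 ≤ l.re) {q₀ : ℝ} (hq₀ : 0 < q₀) (hlq : q₀ ≤ ‖l‖) :
    (((l - 1) / (2 * l)) * ((∑ k ∈ s, ⟪e k, v⟫ ^ 2 : ℝ) : ℂ) - (‖v‖ : ℂ) ^ 2 / 2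
      + Complex.I * l ^ (-(1 : ℂ) / 2) * ((∑ k ∈ s, ⟪e k, v⟫ * ⟪e k, a⟫ : ℝ) : ℂ)
      + Complex.I * (c : ℂ) * ((√(‖v‖ ^ 2 - ∑ k ∈ s, ⟪e k, v⟫ ^ 2) : ℝ) : ℂ)).re
      ≤ (2 * q₀) ^ (-(1 : ℝ) / 2) * ‖v‖ * ‖a‖ := by
  calc _ ≤ |(l ^ (-(1 : ℂ) / 2)).im| * |∑ k ∈ s, ⟪e k, v⟫ * ⟪e k, a⟫| :=
        Complex.re_summand_le hl (Finset.sum_nonneg fun _ _ => sq_nonneg _)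
          (he.sum_inner_sq_le s v)
    _ ≤ (2 * ‖l‖) ^ (-(1 : ℝ) / 2) * (‖v‖ * ‖a‖) := by
        gcongr
        · exact Complex.abs_im_cpow_neg_half_le hl
        · exact he.abs_sum_inner_mul_inner_le s v a
    _ ≤ (2 * q₀) ^ (-(1 : ℝ) / 2) * (‖v‖ * ‖a‖) := by
        refine mul_le_mul_of_nonneg_right ?_ (by positivity)
        exact Real.rpow_le_rpow_of_nonpos (by positivity) (by linarith) (by norm_num)
    _ = (2 * q₀) ^ (-(1 : ℝ) / 2) * ‖v‖ * ‖a‖ := by ring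

end Orthonormal

/-- The paper's orthonormal vectors `e₁, …, eₙ` correspond to `e 0, …, e (n-1)` and `e_{n+1}`
to `e n`. -/
theorem stmt13_general {H : Type*} [NormedAddCommGroup H] [InnerProductSpace ℝ H]
    (e : ℕ → H) (he : Orthonormal ℝ e)
    (B₁ B₂ : H →L[ℝ] H) (a w : H) (q₀ : ℝ) (hq₀ : 0 < q₀)
    (q₁ q₂ : ℝ) (hq₁ : q₀ < |q₁|) (hq₂ : q₀ < |q₂|)
    (l₁ l₂ : ℕ → ℂ)
    (h₁re : ∀ n, 0 < (l₁ n).re) (h₂re : ∀ n, 0 < (l₂ n).re)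
    (h₁lim : Filter.Tendsto l₁ Filter.atTop (nhds (-Complex.I * q₁)))
    (h₂lim : Filter.Tendsto l₂ Filter.atTop (nhds (-Complex.I * q₂))) :
    ∃ N : ℕ, ∀ n ≥ N,
      ‖
        (Complex.exp
          ((((l₁ n - 1) / (2 * l₁ n))
              * ((∑ k ∈ Finset.range n, (⟪e k, B₁ w⟫ : ℝ) ^ 2 : ℝ) : ℂ)
            - ((‖B₁ w‖ : ℂ) ^ 2) / 2
            + Complex.I * (l₁ n) ^ (-(1 : ℂ) / 2)
                * ((∑ k ∈ Finset.range n, (⟪e k, B₁ w⟫ : ℝ) * ⟪e k, a⟫ : ℝ) : ℂ)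
            + Complex.I * ((⟪e n, a⟫ : ℝ) : ℂ)
                * ((Real.sqrt
                    (‖B₁ w‖ ^ 2 - ∑ k ∈ Finset.range n, (⟪e k, B₁ w⟫ : ℝ) ^ 2) : ℝ) : ℂ))
          + (((l₂ n - 1) / (2 * l₂ n))
              * ((∑ k ∈ Finset.range n, (⟪e k, B₂ w⟫ : ℝ) ^ 2 : ℝ) : ℂ)
            - ((‖B₂ w‖ : ℂ) ^ 2) / 2
            + Complex.I * (l₂ n) ^ (-(1 : ℂ) / 2)
                * ((∑ k ∈ Finset.range n, (⟪e k, B₂ w⟫ : ℝ) * ⟪e k, a⟫ : ℝ) : ℂ)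
            + Complex.I * ((⟪e n, a⟫ : ℝ) : ℂ)
                * ((Real.sqrt
                    (‖B₂ w‖ ^ 2 - ∑ k ∈ Finset.range n, (⟪e k, B₂ w⟫ : ℝ) ^ 2) : ℝ) : ℂ))))‖
      ≤ kfun B₁ B₂ a q₀ w := by
  have hnorm : ∀ q : ℝ, ‖-Complex.I * q‖ = |q| := by simp
  obtain ⟨N, hN⟩ := Filter.eventually_atTop.1
    ((h₁lim.norm.eventually_const_lt (by rwa [hnorm])).and
      (h₂lim.norm.eventually_const_lt (by rwa [hnorm])))
  refine ⟨N, fun n hn => ?_⟩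
  have hopNorm : ∀ B : H →L[ℝ] H, (2 * q₀) ^ (-(1 : ℝ) / 2) * ‖B w‖ * ‖a‖
      ≤ (2 * q₀) ^ (-(1 : ℝ) / 2) * ‖B‖ * ‖w‖ * ‖a‖ := fun B => by
    rw [mul_assoc _ ‖B‖]
    gcongr
    exact B.le_opNorm w
  rw [Complex.norm_exp, kfun, Real.exp_le_exp, Complex.add_re]
  exact add_le_add
    ((he.re_summand_le _ _ _ _ (h₁re n).le hq₀ (hN n hn).1.le).trans (hopNorm B₁))
    ((he.re_summand_le _ _ _ _ (h₂re n).le hq₀ (hN n hn).2.le).trans (hopNorm B₂))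

/-- The eventual domination bound of Remark 4.1 of the paper: for sequences
`λ_{j,n} → −iqⱼ` with positive real parts, the exponential expression arising in
the proof of Theorem 4.2 is eventually bounded by `k(q₀; w)`.  (The paper's
orthonormal vectors `e₁, …, eₙ` correspond to `e 0, …, e (n-1)` and `e_{n+1}`
to `e n`.) -/
theorem stmt13 {H : Type*} [NormedAddCommGroup H] [InnerProductSpace ℝ H]
    [TopologicalSpace.SeparableSpace H]
    (e : ℕ → H) (he : Orthonormal ℝ e)
    (B₁ B₂ : H →L[ℝ] H) (a w : H) (q₀ : ℝ) (hq₀ : 0 < q₀)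
    (q₁ q₂ : ℝ) (hq₁ : q₀ < |q₁|) (hq₂ : q₀ < |q₂|)
    (l₁ l₂ : ℕ → ℂ)
    (h₁re : ∀ n, 0 < (l₁ n).re) (h₂re : ∀ n, 0 < (l₂ n).re)
    (h₁lim : Filter.Tendsto l₁ Filter.atTop (nhds (-Complex.I * q₁)))
    (h₂lim : Filter.Tendsto l₂ Filter.atTop (nhds (-Complex.I * q₂))) :
    ∃ N : ℕ, ∀ n ≥ N,
      ‖
        (Complex.exp
          ((((l₁ n - 1) / (2 * l₁ n))
              * ((∑ k ∈ Finset.range n, (⟪e k, B₁ w⟫ : ℝ) ^ 2 : ℝ) : ℂ)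
            - ((‖B₁ w‖ : ℂ) ^ 2) / 2
            + Complex.I * (l₁ n) ^ (-(1 : ℂ) / 2)
                * ((∑ k ∈ Finset.range n, (⟪e k, B₁ w⟫ : ℝ) * ⟪e k, a⟫ : ℝ) : ℂ)
            + Complex.I * ((⟪e n, a⟫ : ℝ) : ℂ)
                * ((Real.sqrt
                    (‖B₁ w‖ ^ 2 - ∑ k ∈ Finset.range n, (⟪e k, B₁ w⟫ : ℝ) ^ 2) : ℝ) : ℂ))
          + (((l₂ n - 1) / (2 * l₂ n))
              * ((∑ k ∈ Finset.range n, (⟪e k, B₂ w⟫ : ℝ) ^ 2 : ℝ) : ℂ)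
            - ((‖B₂ w‖ : ℂ) ^ 2) / 2
            + Complex.I * (l₂ n) ^ (-(1 : ℂ) / 2)
                * ((∑ k ∈ Finset.range n, (⟪e k, B₂ w⟫ : ℝ) * ⟪e k, a⟫ : ℝ) : ℂ)
            + Complex.I * ((⟪e n, a⟫ : ℝ) : ℂ)
                * ((Real.sqrt
                    (‖B₂ w‖ ^ 2 - ∑ k ∈ Finset.range n, (⟪e k, B₂ w⟫ : ℝ) ^ 2) : ℝ) : ℂ))))‖
      ≤ kfun B₁ B₂ a q₀ w :=
  stmt13_general e he B₁ B₂ a w q₀ hq₀ q₁ q₂ hq₁ hq₂ l₁ l₂ h₁re h₂re h₁lim h₂lim
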